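/- arXiv:1503.08882 — 3 statements merged into one kernel-verified Lean document; each statement's English description precedes it below -/
import Mathlib

section
/- With the hypotheses of the idempotent lifting lemma, suppose additionally that A carries an anti-involution σ preserving each k_r, and that σ(α) = α. Then the lifted idempotent α̃ can be chosen with σ(α̃) = α̃. -/
/-!
For `f = 3e² - 2e³` one has `f - e = (e² - e)(1 - 2e)` and `f² - f = (e² - e)²(4(e² - e) - 3)`,
so Newton's iteration `e ↦ 3e² - 2e³` moves `e` by its defect `e² - e` while squaring that defect.
Starting from `α` with defect in `k r`, `r ≥ 1`, the `n`-th iterate has defect in `k (r + n)`, so the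
iterates form a Cauchy sequence whose limit is an idempotent congruent to `α` modulo `k r`.
The step is a polynomial in `e`, so it commutes with any additive anti-multiplicative `σ`: the
iterates of a `σ`-fixed `α` are `σ`-fixed, and as `σ` preserves the filtration, so is their limit.
-/

section IdempotentLifting

variable {A : Type*} [Ring A]

def idempotentStep (e : A) : A := 3 • e ^ 2 - 2 • e ^ 3

theorem idempotentStep_sub_self (e : A) :
    idempotentStep e - e = (e * e - e) - 2 • ((e * e - e) * e) := by
  simp only [idempotentStep, nsmul_eq_mul, Nat.cast_ofNat]
  noncomm_ring

theorem idempotentStep_mul_self_sub (e : A) :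
    idempotentStep e * idempotentStep e - idempotentStep e =
      4 • ((e * e - e) * (e * e - e) * (e * e - e)) - 3 • ((e * e - e) * (e * e - e)) := by
  simp only [idempotentStep, nsmul_eq_mul, Nat.cast_ofNat]
  noncomm_ring

theorem map_pow_of_map_mul_rev (σ : A → A) (hσmul : ∀ x y : A, σ (x * y) = σ y * σ x) (x : A)
    {n : ℕ} (hn : n ≠ 0) : σ (x ^ n) = σ x ^ n := by
  induction n with
  | zero => exact absurd rfl hn
  | succ n ih =>
    rcases eq_or_ne n 0 with rfl | hn'
    · simp
    · rw [pow_succ', hσmul, ih hn', pow_succ]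

theorem map_idempotentStep_of_map_mul_rev (σ : A →+ A)
    (hσmul : ∀ x y : A, σ (x * y) = σ y * σ x) (e : A) :
    σ (idempotentStep e) = idempotentStep (σ e) := by
  simp only [idempotentStep, map_sub, map_nsmul, map_pow_of_map_mul_rev σ hσmul e two_ne_zero,
    map_pow_of_map_mul_rev σ hσmul e three_ne_zero]

section Filtration

variable (k : ℕ → AddSubgroup A)

def FiltrationTendsto (e : ℕ → A) (L : A) : Prop :=
  ∀ r : ℕ, ∃ N : ℕ, ∀ n : ℕ, N ≤ n → e n - L ∈ k r

def FiltrationCauchySeq (e : ℕ → A) : Prop :=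
  ∀ r : ℕ, ∃ N : ℕ, ∀ m n : ℕ, N ≤ m → N ≤ n → e m - e n ∈ k r

variable {k} {e f : ℕ → A} {L M : A}

theorem sub_mem_of_step_sub_mem (hk : Antitone k) {s : ℕ}
    (hstep : ∀ n, e (n + 1) - e n ∈ k (s + n)) {n m : ℕ} (hnm : n ≤ m) :
    e m - e n ∈ k (s + n) := by
  induction m, hnm using Nat.le_induction with
  | base => simp
  | succ m hnm ih =>
    rw [← sub_add_sub_cancel]
    exact add_mem (hk (by omega) (hstep m)) ih

theorem FiltrationCauchySeq.of_step_sub_mem (hk : Antitone k) {s : ℕ}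
    (hstep : ∀ n, e (n + 1) - e n ∈ k (s + n)) : FiltrationCauchySeq k e := by
  refine fun r => ⟨r, fun m n hm hn => ?_⟩
  rcases le_total n m with hnm | hmn
  · exact hk (by omega) (sub_mem_of_step_sub_mem hk hstep hnm)
  · rw [← neg_sub]
    exact neg_mem (hk (by omega) (sub_mem_of_step_sub_mem hk hstep hmn))

theorem FiltrationTendsto.zero_of_mem (hk : Antitone k) (he : ∀ n, e n ∈ k n) :
    FiltrationTendsto k e 0 :=
  fun r => ⟨r, fun n hn => by simpa using hk hn (he n)⟩

theorem FiltrationTendsto.sub_mem_of_forall (hL : FiltrationTendsto k e L) {a : A} {r : ℕ}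
    (he : ∀ n, e n - a ∈ k r) : L - a ∈ k r := by
  obtain ⟨N, hN⟩ := hL r
  simpa using sub_mem (he N) (hN N le_rfl)

theorem FiltrationTendsto.sub (he : FiltrationTendsto k e L) (hf : FiltrationTendsto k f M) :
    FiltrationTendsto k (fun n => e n - f n) (L - M) := by
  intro r
  obtain ⟨N, hN⟩ := he r
  obtain ⟨N', hN'⟩ := hf r
  refine ⟨max N N', fun n hn => ?_⟩
  rw [sub_sub_sub_comm]
  exact sub_mem (hN n (le_of_max_le_left hn)) (hN' n (le_of_max_le_right hn))

theorem FiltrationTendsto.mul (hmul : ∀ r s : ℕ, ∀ x ∈ k r, ∀ y ∈ k s, x * y ∈ k (r + s))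
    (he : FiltrationTendsto k e L) (hf : FiltrationTendsto k f M) (hL : L ∈ k 0)
    (hf0 : ∀ n, f n ∈ k 0) : FiltrationTendsto k (fun n => e n * f n) (L * M) := by
  intro r
  obtain ⟨N, hN⟩ := he r
  obtain ⟨N', hN'⟩ := hf r
  refine ⟨max N N', fun n hn => ?_⟩
  have hdecomp : e n * f n - L * M = (e n - L) * f n + L * (f n - M) := by noncomm_ring
  rw [hdecomp]
  exact add_mem (by simpa using hmul r 0 _ (hN n (le_of_max_le_left hn)) _ (hf0 n))
    (by simpa using hmul 0 r _ hL _ (hN' n (le_of_max_le_right hn)))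

theorem FiltrationTendsto.unique (hsep : ∀ x : A, (∀ r : ℕ, 1 ≤ r → x ∈ k r) → x = 0)
    (hL : FiltrationTendsto k e L) (hM : FiltrationTendsto k e M) : L = M := by
  rw [← sub_eq_zero]
  refine hsep _ fun r _ => ?_
  obtain ⟨N, hN⟩ := hL r
  obtain ⟨N', hN'⟩ := hM r
  have h := sub_mem (hN' (max N N') (le_max_right _ _)) (hN (max N N') (le_max_left _ _))
  rwa [sub_sub_sub_cancel_left] at h

theorem FiltrationTendsto.map_eq_self (hsep : ∀ x : A, (∀ r : ℕ, 1 ≤ r → x ∈ k r) → x = 0)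
    (σ : A →+ A) (hσk : ∀ (r : ℕ) (x : A), x ∈ k r → σ x ∈ k r)
    (hL : FiltrationTendsto k e L) (he : ∀ n, σ (e n) = e n) : σ L = L := by
  have hσL : FiltrationTendsto k e (σ L) := fun r => by
    obtain ⟨N, hN⟩ := hL r
    exact ⟨N, fun n hn => by simpa [he] using hσk r _ (hN n hn)⟩
  exact hσL.unique hsep hL

theorem idempotentStep_sub_self_mem
    (hmul : ∀ r s : ℕ, ∀ x ∈ k r, ∀ y ∈ k s, x * y ∈ k (r + s))
    {x : A} {s : ℕ} (hx : x ∈ k 0) (hd : x * x - x ∈ k s) : idempotentStep x - x ∈ k s := by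
  rw [idempotentStep_sub_self]
  exact sub_mem hd (nsmul_mem (by simpa using hmul s 0 _ hd _ hx) 2)

theorem idempotentStep_mul_self_sub_mem (hk : Antitone k)
    (hmul : ∀ r s : ℕ, ∀ x ∈ k r, ∀ y ∈ k s, x * y ∈ k (r + s))
    {x : A} {s : ℕ} (hs : 1 ≤ s) (hd : x * x - x ∈ k s) :
    idempotentStep x * idempotentStep x - idempotentStep x ∈ k (s + 1) := by
  rw [idempotentStep_mul_self_sub]
  have h2 := hmul _ _ _ hd _ hd
  have h3 := hmul _ _ _ h2 _ hd
  exact sub_mem (nsmul_mem (hk (by omega) h3) 4) (nsmul_mem (hk (by omega) h2) 3)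

theorem iterate_idempotentStep_mem (hk : Antitone k)
    (hmul : ∀ r s : ℕ, ∀ x ∈ k r, ∀ y ∈ k s, x * y ∈ k (r + s))
    {α : A} {s : ℕ} (hα : α ∈ k 0) (hs : 1 ≤ s) (hd : α * α - α ∈ k s) (n : ℕ) :
    idempotentStep^[n] α ∈ k 0 ∧
      idempotentStep^[n] α * idempotentStep^[n] α - idempotentStep^[n] α ∈ k (s + n) := by
  induction n with
  | zero => exact ⟨hα, hd⟩
  | succ n ih =>
    obtain ⟨hx, hdx⟩ := ih
    rw [Function.iterate_succ_apply']
    refine ⟨?_, idempotentStep_mul_self_sub_mem hk hmul (by omega : 1 ≤ s + n) hdx⟩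
    simpa using add_mem (idempotentStep_sub_self_mem hmul hx (hk (Nat.zero_le _) hdx)) hx

theorem exists_isIdempotentElem_tendsto_iterate (hk : Antitone k)
    (hmul : ∀ r s : ℕ, ∀ x ∈ k r, ∀ y ∈ k s, x * y ∈ k (r + s))
    (hsep : ∀ x : A, (∀ r : ℕ, 1 ≤ r → x ∈ k r) → x = 0)
    (hcomplete : ∀ e : ℕ → A, FiltrationCauchySeq k e → ∃ L, FiltrationTendsto k e L)
    {α : A} {r : ℕ} (hα : α ∈ k 0) (hr : 1 ≤ r) (hd : α * α - α ∈ k r) :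
    ∃ L : A, IsIdempotentElem L ∧ L ∈ k 0 ∧ L - α ∈ k r ∧
      FiltrationTendsto k (fun n => idempotentStep^[n] α) L := by
  set e : ℕ → A := fun n => idempotentStep^[n] α
  have he := iterate_idempotentStep_mem hk hmul hα hr hd
  have hstep (n : ℕ) : e (n + 1) - e n ∈ k (r + n) := by
    simp only [e, Function.iterate_succ_apply']
    exact idempotentStep_sub_self_mem hmul (he n).1 (he n).2
  obtain ⟨L, hL⟩ := hcomplete e (.of_step_sub_mem hk hstep)
  have hLα : L - α ∈ k r := hL.sub_mem_of_forall fun n => by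
    simpa [e] using sub_mem_of_step_sub_mem hk hstep (Nat.zero_le n)
  have hL0 : L ∈ k 0 := by simpa using add_mem (hk (Nat.zero_le r) hLα) hα
  have hdefect := (hL.mul hmul hL hL0 fun n => (he n).1).sub hL
  have hdefect_zero : FiltrationTendsto k (fun n => e n * e n - e n) 0 :=
    .zero_of_mem hk fun n => hk (by omega) (he n).2
  exact ⟨L, sub_eq_zero.mp (hdefect.unique hsep hdefect_zero), hL0, hLα, hL⟩

end Filtration

end IdempotentLifting

theorem idempotent_lifting_symmetric_general {A : Type*} [Ring A] (k : ℕ → AddSubgroup A)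
    (hdec : ∀ r s : ℕ, r ≤ s → k s ≤ k r)
    (hmul : ∀ r s : ℕ, ∀ x ∈ k r, ∀ y ∈ k s, x * y ∈ k (r + s))
    (hsep : ∀ x : A, (∀ r : ℕ, 1 ≤ r → x ∈ k r) → x = 0)
    (hcomplete : ∀ e : ℕ → A,
      (∀ r : ℕ, ∃ N : ℕ, ∀ m n : ℕ, N ≤ m → N ≤ n → e m - e n ∈ k r) →
      ∃ L : A, ∀ r : ℕ, ∃ N : ℕ, ∀ n : ℕ, N ≤ n → e n - L ∈ k r)
    (σ : A → A)
    (hσadd : ∀ x y : A, σ (x + y) = σ x + σ y)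
    (hσmul : ∀ x y : A, σ (x * y) = σ y * σ x)
    (hσk : ∀ (r : ℕ) (x : A), x ∈ k r → σ x ∈ k r)
    (α : A) (hα : α ∈ k 0) (r : ℕ) (hr : 1 ≤ r)
    (hidem : α * α - α ∈ k r) (hσα : σ α = α) :
    ∃ α' : A, α' * α' = α' ∧ α' ∈ k 0 ∧ α' - α ∈ k r ∧ σ α' = α' := by
  let σ' : A →+ A := AddMonoidHom.mk' σ hσadd
  obtain ⟨L, hLidem, hL0, hLα, hL⟩ :=
    exists_isIdempotentElem_tendsto_iterate hdec hmul hsep hcomplete hα hr hidem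
  have hcomm : Function.Commute σ' idempotentStep := map_idempotentStep_of_map_mul_rev σ' hσmul
  have hfixed (n : ℕ) : σ' (idempotentStep^[n] α) = idempotentStep^[n] α := by
    rw [(hcomm.iterate_right n).eq]
    exact congrArg _ hσα
  exact ⟨L, hLidem, hL0, hLα, hL.map_eq_self hsep σ' hσk hfixed⟩

/-- Idempotent lifting with an anti-involution: the lifted idempotent can be chosen σ-fixed. -/
theorem idempotent_lifting_symmetric {A : Type*} [Ring A] (k : ℕ → AddSubgroup A)
    (hdec : ∀ r s : ℕ, r ≤ s → k s ≤ k r)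
    (hmul : ∀ r s : ℕ, ∀ x ∈ k r, ∀ y ∈ k s, x * y ∈ k (r + s))
    (hsep : ∀ x : A, (∀ r : ℕ, 1 ≤ r → x ∈ k r) → x = 0)
    (hcomplete : ∀ e : ℕ → A,
      (∀ r : ℕ, ∃ N : ℕ, ∀ m n : ℕ, N ≤ m → N ≤ n → e m - e n ∈ k r) →
      ∃ L : A, ∀ r : ℕ, ∃ N : ℕ, ∀ n : ℕ, N ≤ n → e n - L ∈ k r)
    (σ : A → A)
    (hσadd : ∀ x y : A, σ (x + y) = σ x + σ y)
    (hσmul : ∀ x y : A, σ (x * y) = σ y * σ x)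
    (hσinv : ∀ x : A, σ (σ x) = x)
    (hσk : ∀ (r : ℕ) (x : A), x ∈ k r → σ x ∈ k r)
    (α : A) (hα : α ∈ k 0) (r : ℕ) (hr : 1 ≤ r)
    (hidem : α * α - α ∈ k r) (hσα : σ α = α) :
    ∃ α' : A, α' * α' = α' ∧ α' ∈ k 0 ∧ α' - α ∈ k r ∧ σ α' = α' :=
  idempotent_lifting_symmetric_general k hdec hmul hsep hcomplete σ hσadd hσmul hσk α hα r hr hidem
    hσα
end

section
/- Let Λ be a lattice sequence in V of period e over o_F. Then the direct sum Λ ⊕ (Λ+1) ⊕ ⋯ ⊕ (Λ+e−1), defined in V^{⊕e} by (⊕_{l}(Λ+l))_i = ⊕_{l=0}^{e−1} Λ_{i−l}, is a lattice chain, i.e. an injective lattice sequence, of the same period e. -/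
open Pointwise

/-
Monotonicity and periodicity of `⊕ₗ(Λ+l)` hold componentwise. For strict monotonicity it
suffices to rule out `⊕ₗ(Λ+l)_{s+1} = ⊕ₗ(Λ+l)_s`. Comparing components, this says
`Λ_{s+1-l} = Λ_{s-l}` for `0 ≤ l < e`, and these equalities telescope to
`Λ_{s+1} = Λ_{s+1-e}`. By periodicity the lattice `M = Λ_{s+1-e}` then satisfies `M = π M`,
so `M = 0` by Nakayama's lemma, which is impossible for a lattice.
-/

/-- The direct sum `Λ ⊕ (Λ+1) ⊕ ⋯ ⊕ (Λ+e−1)` of the translates of a lattice sequence `Λ`,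
defined by `(⊕ₗ(Λ+l))_i = ⊕_{l=0}^{e-1} Λ_{i-l}` inside `V^{⊕e}`. -/
def translateSum {O V : Type*} [CommRing O] [AddCommGroup V] [Module O V]
    (Λ : ℤ → Submodule O V) (e : ℕ) : ℤ → Submodule O (Fin e → V) :=
  fun i => Submodule.pi Set.univ (fun l : Fin e => Λ (i - (l : ℕ)))

namespace Submodule

variable {R M ι : Type*} [CommRing R] [AddCommGroup M] [Module R M]

theorem smul_pi_univ (r : R) (p : ι → Submodule R M) :
    r • pi Set.univ p = pi Set.univ (fun i => r • p i) :=
  SetLike.coe_injective <| by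
    simp only [coe_pointwise_smul, coe_pi, Set.smul_set_univ_pi]
    rfl

theorem pi_univ_le_pi_univ_iff {p q : ι → Submodule R M} :
    pi Set.univ p ≤ pi Set.univ q ↔ ∀ i, p i ≤ q i := by
  classical
  refine ⟨fun h i x hx => ?_, fun h => pi_mono fun i _ => h i⟩
  simpa using h (le_comap_single_pi p hx) i trivial

theorem eq_bot_of_eq_smul_of_not_isUnit [IsLocalRing R] {r : R} (hr : ¬IsUnit r)
    {N : Submodule R M} (hN : N.FG) (hrN : N = r • N) : N = ⊥ :=
  eq_bot_of_eq_pointwise_smul_of_mem_jacobson_annihilator hN hrN <|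
    Ideal.jacobson_mono bot_le <| by
      rwa [IsLocalRing.jacobson_eq_maximalIdeal ⊥ bot_ne_top, IsLocalRing.mem_maximalIdeal]

end Submodule

theorem Int.eq_sub_of_forall_eq_sub_succ {α : Type*} {f : ℤ → α} {a : ℤ} {n : ℕ}
    (h : ∀ l < n, f (a - l) = f (a - (l + 1))) : f a = f (a - n) := by
  induction n with
  | zero => simp
  | succ n ih =>
    rw [ih fun l hl => h l (by omega), h n n.lt_succ_self]
    push_cast
    rfl

section translateSum

variable {O V : Type*} [CommRing O] [AddCommGroup V] [Module O V]
  {Λ : ℤ → Submodule O V} {e : ℕ}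

theorem translateSum_antitone (hΛ : Antitone Λ) : Antitone (translateSum Λ e) :=
  fun _ _ hst => Submodule.pi_mono fun _ _ => hΛ (by omega)

theorem translateSum_add_period {π : O} (hper : ∀ s : ℤ, Λ (s + e) = π • Λ s) (s : ℤ) :
    translateSum Λ e (s + e) = π • translateSum Λ e s := by
  simp only [translateSum, Submodule.smul_pi_univ, ← hper, add_sub_right_comm]

theorem eq_sub_period_of_translateSum_succ_eq (hΛ : Antitone Λ) {s : ℤ}
    (h : translateSum Λ e (s + 1) = translateSum Λ e s) : Λ (s + 1) = Λ (s + 1 - e) := by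
  refine Int.eq_sub_of_forall_eq_sub_succ fun l hl => le_antisymm (hΛ (by omega)) ?_
  have hcomp := Submodule.pi_univ_le_pi_univ_iff.mp h.ge ⟨l, hl⟩
  rwa [show s + 1 - (l + 1) = s - l by ring]

theorem translateSum_strictAnti [IsLocalRing O] {π : O} (hπ : ¬IsUnit π) (hΛ : Antitone Λ)
    (hper : ∀ s : ℤ, Λ (s + e) = π • Λ s) (hfg : ∀ s, (Λ s).FG) (hne : ∀ s, Λ s ≠ ⊥) :
    StrictAnti (translateSum Λ e) := by
  refine strictAnti_int_of_succ_lt fun s =>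
    (translateSum_antitone hΛ (Int.le_add_one le_rfl)).lt_of_ne fun h => hne (s + 1 - e) ?_
  refine Submodule.eq_bot_of_eq_smul_of_not_isUnit hπ (hfg _) ?_
  rw [← hper, sub_add_cancel, ← eq_sub_period_of_translateSum_succ_eq hΛ h]

end translateSum

theorem translateSum_is_chain_general {O F V : Type*} [CommRing O] [IsDomain O]
    [IsDiscreteValuationRing O] [Field F]
    [AddCommGroup V] [Module F V] [Module O V]
    [Nontrivial V]
    (π : O) (hπ : Irreducible π)
    (Λ : ℤ → Submodule O V) (e : ℕ)
    (hdec : ∀ s t : ℤ, s ≤ t → Λ t ≤ Λ s)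
    (hper : ∀ s : ℤ, Λ (s + (e : ℤ)) = π • Λ s)
    (hfg : ∀ s : ℤ, (Λ s).FG)
    (hspan : ∀ s : ℤ, Submodule.span F ((Λ s : Set V)) = ⊤) :
    (∀ s t : ℤ, s ≤ t → translateSum Λ e t ≤ translateSum Λ e s) ∧
    (∀ s : ℤ, translateSum Λ e (s + (e : ℤ)) = π • translateSum Λ e s) ∧
    Function.Injective (translateSum Λ e) := by
  have hne (s : ℤ) : Λ s ≠ ⊥ := fun h => by simpa [h] using hspan s
  exact ⟨translateSum_antitone hdec, translateSum_add_period hper,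
    (translateSum_strictAnti hπ.not_isUnit hdec hper hfg hne).injective⟩

/-- For a lattice sequence `Λ` of period `e`, the direct sum of its translates
`Λ ⊕ (Λ+1) ⊕ ⋯ ⊕ (Λ+e−1)` is a lattice chain (an injective lattice sequence) of the same
period `e`. -/
theorem translateSum_is_chain {O F V : Type*} [CommRing O] [IsDomain O]
    [IsDiscreteValuationRing O] [Field F] [Algebra O F] [IsFractionRing O F]
    [AddCommGroup V] [Module F V] [Module O V] [IsScalarTower O F V] [FiniteDimensional F V]
    [Nontrivial V]
    (π : O) (hπ : Irreducible π)
    (Λ : ℤ → Submodule O V) (e : ℕ) (he : 0 < e)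
    (hdec : ∀ s t : ℤ, s ≤ t → Λ t ≤ Λ s)
    (hper : ∀ s : ℤ, Λ (s + (e : ℤ)) = π • Λ s)
    (hfg : ∀ s : ℤ, (Λ s).FG)
    (hspan : ∀ s : ℤ, Submodule.span F ((Λ s : Set V)) = ⊤) :
    (∀ s t : ℤ, s ≤ t → translateSum Λ e t ≤ translateSum Λ e s) ∧
    (∀ s : ℤ, translateSum Λ e (s + (e : ℤ)) = π • translateSum Λ e s) ∧
    Function.Injective (translateSum Λ e) :=
  translateSum_is_chain_general π hπ Λ e hdec hper hfg hspan
end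

section
/- Let [Λ, q, q−1, β] be a stratum with ν_Λ(β) = −q > 0, let e = e(Λ|o_F), g = gcd(e,q), and y_β = β^{e/g}·π^{q/g} ∈ a_0(Λ). If the reduction φ_β of the characteristic polynomial of y_β modulo p_F equals X^{dim V}, then β^{em} ∈ a_{1−qme}(Λ) where m = dim_F V; in particular y_β is topologically nilpotent modulo a_1. -/
/-- Membership in the maximal ideal `p_F` of the ring of integers `O`, viewed inside `F`. -/
def InMaxIdeal (O F : Type*) [CommRing O] [IsLocalRing O] [CommRing F] [Algebra O F]
    (x : F) : Prop :=
  ∃ y ∈ IsLocalRing.maximalIdeal O, algebraMap O F y = x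

/-!
With `c` the image of `π` in `F`, scaling by `c` raises the lattice index by exactly `e`, and `β`
lowers it by `q`, so `y = c^{q/g} β^{e/g}` preserves every lattice. Cayley–Hamilton writes `y^m` as
a combination of `1, y, …, y^{m-1}` whose coefficients lie in `p_F`, so `y^m ∈ a_e`, hence
`y^{gm} = c^{qm} β^{em} ∈ a_{ge}`. Cancelling `c^{qm}` gives `β^{em} ∈ a_{ge - qme} ⊆ a_{1-qme}`.
-/

open Polynomial

section EndFiltration

variable {O : Type*} (F : Type*) {V : Type*} [CommRing O] [Field F]
  [AddCommGroup V] [Module F V] [Module O V] (Λ : ℤ → Submodule O V)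

/-- The filtration `a_n(Λ)` of `End_F(V)` attached to a lattice sequence `Λ`. -/
def endFiltration (n : ℤ) : AddSubgroup (Module.End F V) where
  carrier := {f | ∀ s, ∀ v ∈ Λ s, f v ∈ Λ (s + n)}
  add_mem' hf hg s v hv := add_mem (hf s v hv) (hg s v hv)
  zero_mem' _ _ _ := zero_mem _
  neg_mem' hf s v hv := neg_mem (hf s v hv)

variable {F Λ}

theorem mem_endFiltration {n : ℤ} {f : Module.End F V} :
    f ∈ endFiltration F Λ n ↔ ∀ s, ∀ v ∈ Λ s, f v ∈ Λ (s + n) :=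
  Iff.rfl

theorem one_mem_endFiltration : (1 : Module.End F V) ∈ endFiltration F Λ 0 := by
  simp [mem_endFiltration]

theorem mul_mem_endFiltration {i j : ℤ} {f g : Module.End F V} (hf : f ∈ endFiltration F Λ i)
    (hg : g ∈ endFiltration F Λ j) : f * g ∈ endFiltration F Λ (i + j) := by
  intro s v hv
  simpa [add_comm i, ← add_assoc] using hf _ _ (hg s v hv)

theorem pow_mem_endFiltration {n : ℤ} {f : Module.End F V} (hf : f ∈ endFiltration F Λ n)
    (k : ℕ) : f ^ k ∈ endFiltration F Λ (k * n) := by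
  induction k with
  | zero => simpa using one_mem_endFiltration
  | succ k ih => simpa [pow_succ, add_mul] using mul_mem_endFiltration ih hf

theorem endFiltration_antitone (hΛ : Antitone Λ) :
    Antitone (endFiltration F Λ : ℤ → AddSubgroup (Module.End F V)) :=
  fun _ _ hnn' _ hf s v hv => hΛ (by omega) (hf s v hv)

theorem pow_finrank_mem_endFiltration [FiniteDimensional F V] {n : ℤ} {y : Module.End F V}
    (hy : y ∈ endFiltration F Λ 0)
    (hcoeff : ∀ i < Module.finrank F V,
      y.charpoly.coeff i • (1 : Module.End F V) ∈ endFiltration F Λ n) :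
    y ^ Module.finrank F V ∈ endFiltration F Λ n := by
  -- Cayley–Hamilton expresses `y ^ dim V` through lower powers of `y`.
  have hCH := LinearMap.aeval_self_charpoly y
  rw [(LinearMap.charpoly_monic y).as_sum, LinearMap.charpoly_natDegree] at hCH
  simp only [map_add, map_pow, aeval_X, map_sum, map_mul, aeval_C, Algebra.algebraMap_eq_smul_one]
    at hCH
  rw [eq_neg_of_add_eq_zero_left hCH]
  refine neg_mem (sum_mem fun i hi => ?_)
  simpa using mul_mem_endFiltration (hcoeff i (Finset.mem_range.mp hi)) (pow_mem_endFiltration hy i)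

variable [Algebra O F] [IsScalarTower O F V] {π : O} {e : ℕ}

theorem algebraMap_smul_mem_add_iff (hπ : algebraMap O F π ≠ 0)
    (hper : ∀ s : ℤ, ∀ v : V, v ∈ Λ (s + e) ↔ ∃ w ∈ Λ s, v = π • w) {s : ℤ} {v : V} :
    algebraMap O F π • v ∈ Λ (s + e) ↔ v ∈ Λ s := by
  rw [algebraMap_smul, hper]
  refine ⟨fun ⟨w, hw, hvw⟩ => ?_, fun hv => ⟨v, hv, rfl⟩⟩
  obtain rfl : v = w := smul_right_injective V hπ (by simpa only [algebraMap_smul] using hvw)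
  exact hw

theorem algebraMap_pow_smul_mem_add_iff (hπ : algebraMap O F π ≠ 0)
    (hper : ∀ s : ℤ, ∀ v : V, v ∈ Λ (s + e) ↔ ∃ w ∈ Λ s, v = π • w) (k : ℕ) {s : ℤ} {v : V} :
    algebraMap O F π ^ k • v ∈ Λ (s + k * e) ↔ v ∈ Λ s := by
  induction k generalizing s v with
  | zero => simp
  | succ k ih =>
    rw [pow_succ, mul_smul, show s + ↑(k + 1) * ↑e = s + e + k * e by push_cast; ring, ih,
      algebraMap_smul_mem_add_iff hπ hper]

theorem algebraMap_pow_smul_mem_endFiltration_iff (hπ : algebraMap O F π ≠ 0)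
    (hper : ∀ s : ℤ, ∀ v : V, v ∈ Λ (s + e) ↔ ∃ w ∈ Λ s, v = π • w) (k : ℕ) {n : ℤ}
    {f : Module.End F V} :
    algebraMap O F π ^ k • f ∈ endFiltration F Λ (n + k * e) ↔ f ∈ endFiltration F Λ n := by
  simp only [mem_endFiltration, LinearMap.smul_apply, ← add_assoc,
    algebraMap_pow_smul_mem_add_iff hπ hper]

theorem smul_one_mem_endFiltration_of_inMaxIdeal [IsDomain O] [IsDiscreteValuationRing O]
    (hπ : Irreducible π) (hπΛ : ∀ s : ℤ, ∀ v ∈ Λ s, π • v ∈ Λ (s + e)) {x : F}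
    (hx : InMaxIdeal O F x) : x • (1 : Module.End F V) ∈ endFiltration F Λ e := by
  obtain ⟨p, hp, rfl⟩ := hx
  rw [hπ.maximalIdeal_eq, Ideal.mem_span_singleton] at hp
  obtain ⟨u, rfl⟩ := hp
  intro s v hv
  simpa [mul_smul] using hπΛ s _ (Submodule.smul_mem _ u hv)

end EndFiltration

theorem non_fundamental_nilpotent_general {O F V : Type*} [CommRing O] [IsDomain O]
    [IsDiscreteValuationRing O] [Field F] [Algebra O F] [IsFractionRing O F]
    [AddCommGroup V] [Module F V] [Module O V] [IsScalarTower O F V] [FiniteDimensional F V]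
    (π : O) (hπ : Irreducible π)
    (Λ : ℤ → Submodule O V) (e q : ℕ) (he : 0 < e)
    (hdec : ∀ s t : ℤ, s ≤ t → Λ t ≤ Λ s)
    (hper : ∀ s : ℤ, ∀ v : V, v ∈ Λ (s + (e : ℤ)) ↔ ∃ w ∈ Λ s, v = π • w)
    (β : Module.End F V)
    (hβq : ∀ s : ℤ, ∀ v ∈ Λ s, β v ∈ Λ (s - (q : ℤ)))
    (m : ℕ) (hm : m = Module.finrank F V)
    (hchar : ∀ i : ℕ, i < m →
      InMaxIdeal O F
        ((LinearMap.charpoly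
            ((algebraMap O F π) ^ (q / Nat.gcd e q) • β ^ (e / Nat.gcd e q))).coeff i)) :
    ∀ s : ℤ, ∀ v ∈ Λ s, (β ^ (e * m)) v ∈ Λ (s + (1 - (q * m * e : ℤ))) := by
  set g := Nat.gcd e q
  set c := algebraMap O F π
  set y := c ^ (q / g) • β ^ (e / g)
  have hc : c ≠ 0 := (map_ne_zero_iff _ (IsFractionRing.injective O F)).mpr hπ.ne_zero
  have hg : 0 < g := Nat.gcd_pos_of_pos_left q he
  have heg : e / g * g = e := Nat.div_mul_cancel (Nat.gcd_dvd_left e q)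
  have hqg : q / g * g = q := Nat.div_mul_cancel (Nat.gcd_dvd_right e q)
  have hβ : β ∈ endFiltration F Λ (-q) := fun s v hv => by
    simpa [sub_eq_add_neg] using hβq s v hv
  have hy : y ∈ endFiltration F Λ 0 := by
    have key : ((e / g : ℕ) : ℤ) * -q + (q / g : ℕ) * e = 0 := by
      have heg' : ((e / g : ℕ) : ℤ) * g = e := mod_cast heg
      have hqg' : ((q / g : ℕ) : ℤ) * g = q := mod_cast hqg
      linear_combination ((e / g : ℕ) : ℤ) * hqg' - ((q / g : ℕ) : ℤ) * heg'
    simpa only [key] using (algebraMap_pow_smul_mem_endFiltration_iff hc hper (q / g)).mpr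
      (pow_mem_endFiltration hβ (e / g))
  have hym : y ^ m ∈ endFiltration F Λ e := by
    subst hm
    exact pow_finrank_mem_endFiltration hy fun i hi =>
      smul_one_mem_endFiltration_of_inMaxIdeal hπ (fun s v hv => (hper s _).mpr ⟨v, hv, rfl⟩)
        (hchar i hi)
  have hygm : c ^ (q * m) • β ^ (e * m) ∈ endFiltration F Λ (g * e) := by
    convert pow_mem_endFiltration hym g using 1
    rw [← pow_mul, _root_.smul_pow, ← pow_mul, ← pow_mul, mul_comm m g, ← mul_assoc,
      ← mul_assoc, hqg, heg]
  rw [show (g : ℤ) * e = g * e - ↑(q * m) * e + ↑(q * m) * e by ring,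
    algebraMap_pow_smul_mem_endFiltration_iff hc hper] at hygm
  refine endFiltration_antitone hdec ?_ hygm
  push_cast
  nlinarith

/-- If, for a stratum `[Λ, q, q−1, β]` with `ν_Λ(β) = −q`, the reduction mod `p_F` of the
characteristic polynomial of `y_β = β^{e/g} π^{q/g}` equals `X^{dim V}`, then
`β^{em} ∈ a_{1−qme}(Λ)`, where `m = dim_F V`. -/
theorem non_fundamental_nilpotent {O F V : Type*} [CommRing O] [IsDomain O]
    [IsDiscreteValuationRing O] [Field F] [Algebra O F] [IsFractionRing O F]
    [AddCommGroup V] [Module F V] [Module O V] [IsScalarTower O F V] [FiniteDimensional F V]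
    (π : O) (hπ : Irreducible π)
    (Λ : ℤ → Submodule O V) (e q : ℕ) (he : 0 < e) (hq : 0 < q)
    (hdec : ∀ s t : ℤ, s ≤ t → Λ t ≤ Λ s)
    (hper : ∀ s : ℤ, ∀ v : V, v ∈ Λ (s + (e : ℤ)) ↔ ∃ w ∈ Λ s, v = π • w)
    (hfg : ∀ s : ℤ, (Λ s).FG)
    (hspan : ∀ s : ℤ, Submodule.span F ((Λ s : Set V)) = ⊤)
    (β : Module.End F V)
    (hβq : ∀ s : ℤ, ∀ v ∈ Λ s, β v ∈ Λ (s - (q : ℤ)))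
    (hβexact : ¬ ∀ s : ℤ, ∀ v ∈ Λ s, β v ∈ Λ (s - (q : ℤ) + 1))
    (m : ℕ) (hm : m = Module.finrank F V)
    (hchar : ∀ i : ℕ, i < m →
      InMaxIdeal O F
        ((LinearMap.charpoly
            ((algebraMap O F π) ^ (q / Nat.gcd e q) • β ^ (e / Nat.gcd e q))).coeff i)) :
    ∀ s : ℤ, ∀ v ∈ Λ s, (β ^ (e * m)) v ∈ Λ (s + (1 - (q * m * e : ℤ))) :=
  non_fundamental_nilpotent_general π hπ Λ e q he hdec hper β hβq m hm hchar
end
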